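/- arXiv:2010.10441 — 2 statements merged into one kernel-verified Lean document; each statement's English description precedes it below -/
import Mathlib

section
/- For an integer n and an irrational real r > 1, n ∈ P_r if and only if h(n) = exp(2πi·n/r) lies in the open counter-clockwise arc of the unit circle from exp(−2πi/r) to 1. -/
open Complex

def Pr (r : ℝ) : Set ℤ := {x | ∃ m : ℤ, m ≠ 0 ∧ x = ⌊(m : ℝ) * r⌋}

noncomputable def uexp (x : ℝ) : ℂ := Complex.exp (2 * Real.pi * Complex.I * x)

/-- The counter-clockwise orientation relation on the unit circle. -/
def Orient (α β γ : ℂ) : Prop :=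
  ∃ x y z : ℝ, x < y ∧ y < z ∧ z - x < 1 ∧ α = uexp x ∧ β = uexp y ∧ γ = uexp z

/-- The open counter-clockwise arc from `α` to `β`. -/
def arc (α β : ℂ) : Set ℂ := {γ | Orient α γ β}

/-!
Both sides say that `n / r` lies within `1 / r` below an integer `m`: on the circle side
because `1 / r < 1` makes the arc a single interval `(m - 1/r, m)` modulo `ℤ`, on the
`P_r` side because `n = ⌊m r⌋` means `m r - 1 < n < m r`, strictly since `m r` is irrational.
-/

lemma uexp_eq_uexp_iff {a b : ℝ} : uexp a = uexp b ↔ ∃ k : ℤ, a = b + k := by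
  have h2πi : (2 * Real.pi * I : ℂ) ≠ 0 := by simp [Real.pi_ne_zero, I_ne_zero]
  simp only [uexp, exp_eq_exp_iff_exists_int]
  refine exists_congr fun k => ?_
  rw [← ofReal_inj, ofReal_add, ofReal_intCast]
  constructor
  · intro h
    exact mul_left_cancel₀ h2πi (by linear_combination h)
  · intro h
    linear_combination 2 * Real.pi * I * h

lemma uexp_zero : uexp 0 = 1 := by simp [uexp]

lemma uexp_sub_intCast (t : ℝ) (m : ℤ) : uexp (t - m) = uexp t :=
  uexp_eq_uexp_iff.mpr ⟨-m, by push_cast; ring⟩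

lemma mem_arc_uexp_iff {a b t : ℝ} (hab : a < b) (hba : b - a < 1) :
    uexp t ∈ arc (uexp a) (uexp b) ↔ ∃ m : ℤ, t - m ∈ Set.Ioo a b := by
  constructor
  · rintro ⟨x, y, z, hxy, hyz, hzx, hx, hy, hz⟩
    obtain ⟨j, rfl⟩ := uexp_eq_uexp_iff.mp hx.symm
    obtain ⟨k, rfl⟩ := uexp_eq_uexp_iff.mp hy.symm
    obtain ⟨l, rfl⟩ := uexp_eq_uexp_iff.mp hz.symm
    -- the endpoints `a + j` and `b + l` are less than one turn apart, which forces `j = l`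
    have hjl : j = l := by
      have hlt : (j : ℝ) - l < 1 := by linarith
      have hgt : (l : ℝ) - j < 1 := by linarith
      have : j - l < 1 ∧ l - j < 1 := ⟨by exact_mod_cast hlt, by exact_mod_cast hgt⟩
      omega
    subst hjl
    exact ⟨j - k, by push_cast; constructor <;> linarith⟩
  · rintro ⟨m, hlo, hhi⟩
    exact ⟨a, t - m, b, hlo, hhi, hba, rfl, (uexp_sub_intCast t m).symm, rfl⟩

lemma Irrational.floor_eq_iff {x : ℝ} (hx : Irrational x) {n : ℤ} :
    ⌊x⌋ = n ↔ (n : ℝ) < x ∧ x < n + 1 := by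
  rw [Int.floor_eq_iff]
  exact and_congr_left fun _ => le_iff_lt_or_eq.trans (or_iff_left (hx.ne_int n).symm)

lemma mem_Pr_iff {r : ℝ} (hr : Irrational r) {n : ℤ} :
    n ∈ Pr r ↔ ∃ m : ℤ, (n : ℝ) < m * r ∧ m * r < n + 1 := by
  constructor
  · rintro ⟨m, hm, rfl⟩
    exact ⟨m, ((hr.intCast_mul hm).floor_eq_iff).mp rfl⟩
  · rintro ⟨m, hlo, hhi⟩
    have hm : m ≠ 0 := by
      rintro rfl
      rw [Int.cast_zero, zero_mul] at hlo hhi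
      have hn : n < 0 := by exact_mod_cast hlo
      have hn' : -1 < n := by exact_mod_cast (by linarith : (-1 : ℝ) < n)
      omega
    exact ⟨m, hm, (((hr.intCast_mul hm).floor_eq_iff).mpr ⟨hlo, hhi⟩).symm⟩

lemma div_sub_intCast_mem_Ioo_iff {r : ℝ} (hr : 0 < r) (n m : ℤ) :
    (n : ℝ) / r - m ∈ Set.Ioo (-(1 / r)) 0 ↔ (n : ℝ) < m * r ∧ m * r < n + 1 := by
  rw [show (n : ℝ) / r - m = (n - m * r) / r by field_simp, Set.mem_Ioo, ← neg_div,
    div_lt_div_iff_of_pos_right hr, div_neg_iff]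
  constructor
  · rintro ⟨h1, h2 | h2⟩ <;> constructor <;> linarith
  · rintro ⟨h1, h2⟩
    exact ⟨by linarith, Or.inr ⟨by linarith, hr⟩⟩

theorem mem_Pr_iff_arc (r : ℝ) (hr : Irrational r) (hr1 : 1 < r) (n : ℤ) :
    n ∈ Pr r ↔ uexp ((n : ℝ) / r) ∈ arc (uexp (-(1 / r))) 1 := by
  have hr0 : 0 < r := one_pos.trans hr1
  have hinv : 1 / r < 1 := (div_lt_one hr0).mpr hr1
  rw [mem_Pr_iff hr, ← uexp_zero,
    mem_arc_uexp_iff (neg_lt_zero.mpr (by positivity)) (by linarith)]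
  exact exists_congr fun m => (div_sub_intCast_mem_Ioo_iff hr0 n m).symm
end

section
/- Let α = e(a), γ = e(c) with 0 ≤ a < c < 1 and c − a < 1/k for a positive integer k, and let β be on the unit circle. Then β^k lies in the orientation interval (α^k, γ^k) if and only if β ∈ (ζ_k^s·α, ζ_k^s·γ) for some integer s, where ζ_k = e(1/k) is a primitive k-th root of unity. -/
lemma uexp_eq_uexp_iff_s11 {x y : ℝ} : uexp x = uexp y ↔ ∃ n : ℤ, x = y + n := by
  have h2πI : 2 * (Real.pi : ℂ) * Complex.I ≠ 0 := by simp [Real.pi_ne_zero]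
  simp only [uexp, Complex.exp_eq_exp_iff_exists_int]
  refine exists_congr fun n => ?_
  rw [← Complex.ofReal_inj, Complex.ofReal_add, Complex.ofReal_intCast,
    ← mul_right_inj' h2πI (b := (x : ℂ)), mul_add, mul_comm (n : ℂ)]

lemma uexp_add (x y : ℝ) : uexp (x + y) = uexp x * uexp y := by
  simp only [uexp, ← Complex.exp_add]
  push_cast
  ring_nf

lemma uexp_pow (x : ℝ) (k : ℕ) : uexp x ^ k = uexp (k * x) := by
  simp only [uexp, ← Complex.exp_nat_mul]
  push_cast
  ring_nf

lemma uexp_zpow (x : ℝ) (s : ℤ) : uexp x ^ s = uexp (s * x) := by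
  simp only [uexp, ← Complex.exp_int_mul]
  push_cast
  ring_nf

lemma exists_uexp_eq_of_norm_eq_one {β : ℂ} (hβ : ‖β‖ = 1) : ∃ b : ℝ, uexp b = β := by
  obtain ⟨θ, rfl⟩ := (Complex.norm_eq_one_iff β).mp hβ
  refine ⟨θ / (2 * Real.pi), ?_⟩
  have hπ : (Real.pi : ℂ) ≠ 0 := by exact_mod_cast Real.pi_ne_zero
  simp only [uexp]
  push_cast
  field_simp

lemma uexp_mem_arc_iff {a b c : ℝ} (hac : a ≤ c) (hca : c - a < 1) :
    uexp b ∈ arc (uexp a) (uexp c) ↔ ∃ n : ℤ, a < b + n ∧ b + n < c := by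
  constructor
  · rintro ⟨x, y, z, hxy, hyz, hzx, hxa, hyb, hzc⟩
    obtain ⟨p, rfl⟩ := uexp_eq_uexp_iff_s11.mp hxa
    obtain ⟨q, rfl⟩ := uexp_eq_uexp_iff_s11.mp hyb
    obtain ⟨r, rfl⟩ := uexp_eq_uexp_iff_s11.mp hzc
    -- `r - p` is an integer strictly between `c - a - 1` and `c - a`
    have hpr : p = r := by
      have hlt : ((r - p : ℤ) : ℝ) < 1 := by push_cast; linarith
      have hgt : (-1 : ℝ) < ((r - p : ℤ) : ℝ) := by push_cast; linarith
      have : r - p < 1 := by exact_mod_cast hlt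
      have : -1 < r - p := by exact_mod_cast hgt
      omega
    subst hpr
    exact ⟨p - q, by push_cast; linarith, by push_cast; linarith⟩
  · rintro ⟨n, ha, hc⟩
    exact ⟨a, b + n, c, ha, hc, hca, rfl, uexp_eq_uexp_iff_s11.mpr ⟨-n, by push_cast; ring⟩, rfl⟩

lemma exists_int_between_mul_iff {k : ℕ} (hk : 0 < (k : ℝ)) (a b c : ℝ) :
    (∃ n : ℤ, k * a < k * b + n ∧ k * b + n < k * c) ↔
      ∃ s m : ℤ, s / k + a < b + m ∧ b + m < s / k + c := by
  have hscale (n : ℤ) : k * b + n = k * (b + n / k) := by field_simp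
  simp only [hscale, mul_lt_mul_iff_right₀ hk]
  constructor
  · rintro ⟨n, ha, hc⟩
    refine ⟨-n, 0, ?_, ?_⟩ <;> simp only [Int.cast_neg, Int.cast_zero, neg_div] <;> linarith
  · rintro ⟨s, m, ha, hc⟩
    have hshift : b + ((k * m - s : ℤ) : ℝ) / k = b + m - s / k := by
      push_cast; field_simp; ring
    exact ⟨k * m - s, by rw [hshift]; linarith, by rw [hshift]; linarith⟩

theorem kth_power_arc_general (k : ℕ) (a c : ℝ) (hac : a < c)
    (hlen : c - a < 1 / k) (β : ℂ) (hβ : ‖β‖ = 1) :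
    β ^ k ∈ arc (uexp a ^ k) (uexp c ^ k) ↔
      ∃ s : ℤ, β ∈ arc (uexp (1 / k) ^ s * uexp a) (uexp (1 / k) ^ s * uexp c) := by
  have hk : (0 : ℝ) < k := one_div_pos.mp ((sub_pos.mpr hac).trans hlen)
  have hklen : k * c - k * a < 1 := by rwa [← mul_sub, ← lt_div_iff₀' hk]
  have hk1 : (1 : ℝ) ≤ k := Nat.one_le_cast.mpr (Nat.cast_pos.mp hk)
  have hca : c - a < 1 := hlen.trans_le (div_le_one_of_le₀ hk1 hk.le)
  obtain ⟨b, rfl⟩ := exists_uexp_eq_of_norm_eq_one hβ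
  have hrot (s : ℤ) (x : ℝ) : uexp (1 / k) ^ s * uexp x = uexp (s / k + x) := by
    rw [uexp_zpow, ← uexp_add, mul_one_div]
  simp only [uexp_pow, hrot]
  rw [uexp_mem_arc_iff (by gcongr) hklen, exists_int_between_mul_iff hk]
  refine exists_congr fun s => ?_
  rw [uexp_mem_arc_iff (by linarith) (by linarith)]

theorem kth_power_arc (k : ℕ) (hk : 0 < k) (a c : ℝ) (ha : 0 ≤ a) (hac : a < c) (hc : c < 1)
    (hlen : c - a < 1 / k) (β : ℂ) (hβ : ‖β‖ = 1) :
    β ^ k ∈ arc (uexp a ^ k) (uexp c ^ k) ↔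
      ∃ s : ℤ, β ∈ arc (uexp (1 / k) ^ s * uexp a) (uexp (1 / k) ^ s * uexp c) :=
  kth_power_arc_general k a c hac hlen β hβ
end
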